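/- Let p be a prime and s ≥ 1 an integer. Let f ∈ closure(F_p)(X) have a finite pole at α ∈ closure(F_p) whose order u is not divisible by p. Let v = (v_1, …, v_{2s}) ∈ closure(F_p)^{2s} and suppose there exists an index i ∈ {1, …, 2s} such that α − v_i ≠ α′ − v_j for every finite pole α′ of f and every index j ≠ i. Then L_{v,f} has a pole at β = α − v_i of order exactly u; in particular, since u is not divisible by p, L_{v,f} does not belong to E. -/

import Mathlib

open Polynomial

open scoped Classical

noncomputable section

namespace RestrictedCoords

variable {K L : Type*} [Field K] [Field L]

/-- The degree of a rational function: the maximum of the degrees of its numerator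
and denominator (in lowest terms). -/
def ratDeg (f : RatFunc K) : ℕ := max f.num.natDegree f.denom.natDegree

/-- The order of `f` at `w`: the unique integer such that `(X - w) ^ (ordAt w f) * f`
extends to a rational function with neither a zero nor a pole at `w`.
(Here negative values correspond to poles.) -/
def ordAt (w : K) (f : RatFunc K) : ℤ :=
  (f.num.rootMultiplicity w : ℤ) - (f.denom.rootMultiplicity w : ℤ)

/-- `f` has a (finite) pole at `w`. -/
def HasPoleAt (f : RatFunc K) (w : K) : Prop := f.denom.eval w = 0

/-- The image of a rational function under a field embedding. -/
def ratMap (φ : K →+* L) (f : RatFunc K) : RatFunc L :=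
  algebraMap L[X] (RatFunc L) (f.num.map φ) / algebraMap L[X] (RatFunc L) (f.denom.map φ)

/-- The shifted rational function `f(X + v)`. -/
def shift (v : K) (f : RatFunc K) : RatFunc K :=
  algebraMap K[X] (RatFunc K) (f.num.comp (X + C v)) /
    algebraMap K[X] (RatFunc K) (f.denom.comp (X + C v))

/-- `P_{v,f}(X) = ∏_{i=1}^{s} f(X + v_i) / f(X + v_{s+i})`. -/
def Pvf (s : ℕ) (f : RatFunc K) (v : Fin (s + s) → K) : RatFunc K :=
  ∏ i : Fin s, shift (v (i.castAdd s)) f / shift (v (i.addNat s)) f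

/-- `L_{v,f}(X) = ∑_{i=1}^{s} (f(X + v_i) - f(X + v_{s+i}))`. -/
def Lvf (s : ℕ) (f : RatFunc K) (v : Fin (s + s) → K) : RatFunc K :=
  ∑ i : Fin s, (shift (v (i.castAdd s)) f - shift (v (i.addNat s)) f)

/-- Membership in the class `Q_{d,n}`: rational functions of degree at most `d`
which are not an `n`-th power of a rational function over the algebraic closure. -/
def MemQ (d n : ℕ) (f : RatFunc K) : Prop :=
  ratDeg f ≤ d ∧
    ¬ ∃ g : RatFunc (AlgebraicClosure K),
        ratMap (algebraMap K (AlgebraicClosure K)) f = g ^ n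

/-- Membership in the class `R_d`: rational functions of degree at most `d`
which have at least one finite pole (over the algebraic closure) whose order is not
a multiple of `p`. -/
def MemR (p d : ℕ) (f : RatFunc K) : Prop :=
  ratDeg f ≤ d ∧
    ∃ w : AlgebraicClosure K,
      HasPoleAt (ratMap (algebraMap K (AlgebraicClosure K)) f) w ∧
        ¬ (p : ℤ) ∣ ordAt w (ratMap (algebraMap K (AlgebraicClosure K)) f)

/-- Membership in the exceptional class `E`: rational functions of the form
`α (h(X)^p - h(X)) + β X`. -/
def MemE (p : ℕ) (f : RatFunc L) : Prop :=
  ∃ α β : L, ∃ h : RatFunc L,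
    f = RatFunc.C α * (h ^ p - h) + RatFunc.C β * RatFunc.X

/-- Membership in the class `P_d`: rational functions of degree `d` such that for
every nonzero `ω` the difference `f(X + ω) - f(X)` is not of the exceptional form
`α (g(X)^p - g(X)) + β X` over the algebraic closure. -/
def MemP (p d : ℕ) (f : RatFunc K) : Prop :=
  ratDeg f = d ∧
    ∀ ω : K, ω ≠ 0 →
      ¬ MemE p (ratMap (algebraMap K (AlgebraicClosure K)) (shift ω f - f))

/-- The set `S_r(A)` of elements of `F_{q^r}` all of whose coordinates in the basis `θ`
belong to `A`. -/
def SrSet {Fq K : Type*} [Field Fq] [Fintype Fq] [Field K] [Algebra Fq K]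
    {r : ℕ} (θ : Module.Basis (Fin r) Fq K) (A : Finset Fq) : Finset K :=
  (Fintype.piFinset fun _ : Fin r => A).image fun a => ∑ i, a i • θ i

/-- The mixed character sum `∑_{x ∈ T} χ(f₁(x)) ψ(f₂(x))`, where the points `x`
which are poles of `f₁` or `f₂` are excluded from the summation. -/
def charSum (χ : MulChar K ℂ) (ψ : AddChar K ℂ) (f₁ f₂ : RatFunc K)
    (T : Finset K) : ℂ :=
  ∑ x ∈ T,
    if HasPoleAt f₁ x ∨ HasPoleAt f₂ x then 0
    else χ (f₁.eval (RingHom.id K) x) * ψ (f₂.eval (RingHom.id K) x)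

/-- `κ_s(ρ) = (sρ(2ρ-1) + ρ - 1) / (4s(sρ+1))`. -/
def kappa (s : ℕ) (ρ : ℝ) : ℝ :=
  ((s : ℝ) * ρ * (2 * ρ - 1) + ρ - 1) / (4 * (s : ℝ) * ((s : ℝ) * ρ + 1))

/-!
Measure everything by the order `ordAt` at `β = α - v i`. The term `f(X + v_i)` of `L_{v,f}` has
order `-u` at `β`, and by the isolation hypothesis every other term `±f(X + v_j)` is regular
there, so the strict ultrametric inequality gives `ordAt β L_{v,f} = -u`. On the other hand, for
`a (h^p - h) + b X` the linear part is regular and `h^p - h` has either no pole at `β` or a pole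
of order `p · ordAt β h`, so every pole of an element of `E` has order divisible by `p`.
-/

section ordAt

variable {w : K} {f g : RatFunc K}

@[simp]
lemma ordAt_zero (w : K) : ordAt w (0 : RatFunc K) = 0 := by
  simp [ordAt]

lemma ne_zero_of_ordAt_ne_zero (h : ordAt w f ≠ 0) : f ≠ 0 := by
  rintro rfl
  exact h (ordAt_zero w)

lemma ordAt_div_algebraMap {P Q : K[X]} (hP : P ≠ 0) (hQ : Q ≠ 0) :
    ordAt w (algebraMap K[X] (RatFunc K) P / algebraMap K[X] (RatFunc K) Q) =
      (P.rootMultiplicity w : ℤ) - Q.rootMultiplicity w := by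
  set F := algebraMap K[X] (RatFunc K) P / algebraMap K[X] (RatFunc K) Q
  have hF : F ≠ 0 :=
    div_ne_zero (RatFunc.algebraMap_ne_zero hP) (RatFunc.algebraMap_ne_zero hQ)
  have hcross : F.num * Q = P * F.denom := (RatFunc.num_mul_eq_mul_denom_iff hQ).2 rfl
  have hmult := congrArg (rootMultiplicity w) hcross
  rw [rootMultiplicity_mul (mul_ne_zero (RatFunc.num_ne_zero hF) hQ),
    rootMultiplicity_mul (mul_ne_zero hP F.denom_ne_zero)] at hmult
  unfold ordAt
  omega

lemma ordAt_algebraMap_nonneg (P : K[X]) : 0 ≤ ordAt w (algebraMap K[X] (RatFunc K) P) := by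
  rw [ordAt, RatFunc.denom_algebraMap, ← C_1, rootMultiplicity_C]
  omega

lemma ordAt_C (w a : K) : ordAt w (RatFunc.C a) = 0 := by
  simp [ordAt, rootMultiplicity_C]

lemma hasPoleAt_iff_ordAt_neg : HasPoleAt f w ↔ ordAt w f < 0 := by
  constructor
  · intro hden
    have hnum : f.num.eval w ≠ 0 := by
      intro hnum
      obtain ⟨a, b, hab⟩ := f.isCoprime_num_denom
      have := congrArg (eval w) hab
      rw [eval_add, eval_mul, eval_mul, hnum, show f.denom.eval w = 0 from hden, eval_one] at this
      simp at this
    have h1 : f.num.rootMultiplicity w = 0 := rootMultiplicity_eq_zero hnum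
    have h2 : 0 < f.denom.rootMultiplicity w := (rootMultiplicity_pos f.denom_ne_zero).2 hden
    unfold ordAt
    omega
  · intro hneg
    by_contra hden
    have := rootMultiplicity_eq_zero hden
    unfold ordAt at hneg
    omega

lemma ordAt_mul (hf : f ≠ 0) (hg : g ≠ 0) : ordAt w (f * g) = ordAt w f + ordAt w g := by
  have hN := mul_ne_zero (RatFunc.num_ne_zero hf) (RatFunc.num_ne_zero hg)
  have hD := mul_ne_zero f.denom_ne_zero g.denom_ne_zero
  have hrep : f * g = algebraMap K[X] (RatFunc K) (f.num * g.num) /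
      algebraMap K[X] (RatFunc K) (f.denom * g.denom) := by
    rw [map_mul, map_mul, ← div_mul_div_comm, RatFunc.num_div_denom, RatFunc.num_div_denom]
  rw [hrep, ordAt_div_algebraMap hN hD, rootMultiplicity_mul hN, rootMultiplicity_mul hD]
  unfold ordAt
  push_cast
  ring

lemma ordAt_C_mul {a : K} (ha : a ≠ 0) (f : RatFunc K) :
    ordAt w (RatFunc.C a * f) = ordAt w f := by
  rcases eq_or_ne f 0 with rfl | hf
  · simp
  rw [ordAt_mul (by simpa using ha) hf, ordAt_C, zero_add]

lemma ordAt_neg (f : RatFunc K) : ordAt w (-f) = ordAt w f := by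
  simpa using ordAt_C_mul (w := w) (neg_ne_zero.2 one_ne_zero) f

lemma ordAt_pow (hf : f ≠ 0) (n : ℕ) : ordAt w (f ^ n) = n * ordAt w f := by
  induction n with
  | zero => simpa using ordAt_C w (1 : K)
  | succ n ih =>
    rw [pow_succ, ordAt_mul (pow_ne_zero n hf) hf, ih]
    push_cast
    ring

lemma min_ordAt_le_ordAt_add (hf : f ≠ 0) (hg : g ≠ 0) (hfg : f + g ≠ 0) :
    min (ordAt w f) (ordAt w g) ≤ ordAt w (f + g) := by
  have hD := mul_ne_zero f.denom_ne_zero g.denom_ne_zero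
  have hrep : f + g = algebraMap K[X] (RatFunc K) (f.num * g.denom + f.denom * g.num) /
      algebraMap K[X] (RatFunc K) (f.denom * g.denom) := by
    rw [map_add, map_mul, map_mul, map_mul, ← div_add_div _ _
      (RatFunc.algebraMap_ne_zero f.denom_ne_zero) (RatFunc.algebraMap_ne_zero g.denom_ne_zero),
      RatFunc.num_div_denom, RatFunc.num_div_denom]
  have hN : f.num * g.denom + f.denom * g.num ≠ 0 := by
    intro h0
    rw [hrep, h0, map_zero, zero_div] at hfg
    exact hfg rfl
  have hmin := rootMultiplicity_add w hN
  rw [rootMultiplicity_mul (mul_ne_zero (RatFunc.num_ne_zero hf) g.denom_ne_zero),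
    rootMultiplicity_mul (mul_ne_zero f.denom_ne_zero (RatFunc.num_ne_zero hg))] at hmin
  rw [hrep, ordAt_div_algebraMap hN hD, rootMultiplicity_mul hD]
  unfold ordAt
  omega

lemma ordAt_add_nonneg (hf : 0 ≤ ordAt w f) (hg : 0 ≤ ordAt w g) : 0 ≤ ordAt w (f + g) := by
  rcases eq_or_ne f 0 with rfl | hf0
  · simpa using hg
  rcases eq_or_ne g 0 with rfl | hg0
  · simpa using hf
  rcases eq_or_ne (f + g) 0 with hfg | hfg
  · simp [hfg]
  exact (le_min hf hg).trans (min_ordAt_le_ordAt_add hf0 hg0 hfg)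

lemma ordAt_add_of_lt (hf : f ≠ 0) (h : ordAt w f < ordAt w g) :
    ordAt w (f + g) = ordAt w f := by
  rcases eq_or_ne g 0 with rfl | hg
  · simp
  have hfg : f + g ≠ 0 := by
    intro h0
    rw [eq_neg_of_add_eq_zero_right h0, ordAt_neg] at h
    exact lt_irrefl _ h
  have hle := min_ordAt_le_ordAt_add (w := w) hf hg hfg
  -- the reverse inequality: write `f = (f + g) + (-g)`
  have hge := min_ordAt_le_ordAt_add (w := w) hfg (neg_ne_zero.2 hg) (by simpa using hf)
  rw [add_neg_cancel_right, ordAt_neg] at hge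
  omega

lemma ordAt_sum_nonneg {ι : Type*} (t : Finset ι) (F : ι → RatFunc K)
    (h : ∀ j ∈ t, 0 ≤ ordAt w (F j)) : 0 ≤ ordAt w (∑ j ∈ t, F j) :=
  Finset.sum_induction F (fun g => 0 ≤ ordAt w g) (fun _ _ => ordAt_add_nonneg)
    (ordAt_zero w).ge h

lemma ordAt_sum_of_isolated_pole {ι : Type*} [Fintype ι] (F : ι → RatFunc K) {i : ι}
    (hi : ordAt w (F i) < 0) (hrest : ∀ j ≠ i, 0 ≤ ordAt w (F j)) :
    ordAt w (∑ j, F j) = ordAt w (F i) := by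
  rw [← Finset.add_sum_erase _ _ (Finset.mem_univ i)]
  exact ordAt_add_of_lt (ne_zero_of_ordAt_ne_zero hi.ne)
    (hi.trans_le (ordAt_sum_nonneg _ _ fun j hj => hrest j (Finset.ne_of_mem_erase hj)))

lemma rootMultiplicity_comp_X_add_C (P : K[X]) (v w : K) :
    (P.comp (X + C v)).rootMultiplicity w = P.rootMultiplicity (w + v) := by
  rw [rootMultiplicity_eq_rootMultiplicity (t := w), comp_assoc,
    rootMultiplicity_eq_rootMultiplicity (t := w + v)]
  congr 2
  simp only [add_comp, X_comp, C_comp, map_add]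
  ring

lemma ordAt_shift (v w : K) (f : RatFunc K) : ordAt w (shift v f) = ordAt (w + v) f := by
  rcases eq_or_ne f 0 with rfl | hf
  · simp [shift]
  rw [shift, ordAt_div_algebraMap (fun h => RatFunc.num_ne_zero hf (comp_X_add_C_eq_zero_iff.1 h))
    (fun h => f.denom_ne_zero (comp_X_add_C_eq_zero_iff.1 h)),
    rootMultiplicity_comp_X_add_C, rootMultiplicity_comp_X_add_C, ordAt]

end ordAt

lemma Lvf_eq_sum (s : ℕ) (f : RatFunc K) (v : Fin (s + s) → K) :
    Lvf s f v = ∑ j : Fin (s + s), if (j : ℕ) < s then shift (v j) f else -shift (v j) f := by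
  rw [Fin.sum_univ_add]
  simp [Lvf, Fin.natAdd_eq_addNat, sub_eq_add_neg, Finset.sum_add_distrib]

lemma ordAt_Lvf_of_isolated_pole {w : K} {s : ℕ} {f : RatFunc K} {v : Fin (s + s) → K}
    {i : Fin (s + s)} (hi : ordAt w (shift (v i) f) < 0)
    (hrest : ∀ j ≠ i, 0 ≤ ordAt w (shift (v j) f)) :
    ordAt w (Lvf s f v) = ordAt w (shift (v i) f) := by
  have hsign : ∀ j : Fin (s + s),
      ordAt w (if (j : ℕ) < s then shift (v j) f else -shift (v j) f) =
        ordAt w (shift (v j) f) := fun j => by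
    split_ifs
    · rfl
    · exact ordAt_neg _
  rw [Lvf_eq_sum, ordAt_sum_of_isolated_pole _ (i := i) (by rwa [hsign])
    (fun j hj => by rw [hsign]; exact hrest j hj), hsign]

lemma dvd_ordAt_pow_sub_self {w : K} {p : ℕ} (hp : 1 < p) {h : RatFunc K}
    (hneg : ordAt w (h ^ p - h) < 0) : (p : ℤ) ∣ ordAt w (h ^ p - h) := by
  have hh : h ≠ 0 := by
    rintro rfl
    simp [zero_pow (show p ≠ 0 by omega)] at hneg
  rw [sub_eq_add_neg] at hneg ⊢
  rcases lt_or_ge (ordAt w h) 0 with hlt | hge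
  · have hp' : (1 : ℤ) < p := by exact_mod_cast hp
    have hpow : ordAt w (h ^ p) = p * ordAt w h := ordAt_pow hh p
    rw [ordAt_add_of_lt (pow_ne_zero p hh) (by rw [ordAt_neg, hpow]; nlinarith), hpow]
    exact dvd_mul_right _ _
  · exact absurd hneg
      (ordAt_add_nonneg (by rw [ordAt_pow hh]; positivity) (by rwa [ordAt_neg])).not_gt

lemma not_memE_of_ordAt_neg {w : K} {p : ℕ} (hp : 1 < p) {F : RatFunc K}
    (hneg : ordAt w F < 0) (hdvd : ¬ (p : ℤ) ∣ ordAt w F) : ¬ MemE p F := by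
  rintro ⟨a, b, h, rfl⟩
  have hlin : 0 ≤ ordAt w (RatFunc.C b * RatFunc.X) := by
    rw [← RatFunc.algebraMap_C, ← RatFunc.algebraMap_X, ← map_mul]
    exact ordAt_algebraMap_nonneg _
  rcases le_or_gt 0 (ordAt w (RatFunc.C a * (h ^ p - h))) with hG | hG
  · exact absurd hneg (ordAt_add_nonneg hG hlin).not_gt
  have ha : a ≠ 0 := by
    rintro rfl
    simp at hG
  rw [ordAt_add_of_lt (ne_zero_of_ordAt_ne_zero hG.ne) (hG.trans_le hlin), ordAt_C_mul ha] at hdvd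
  rw [ordAt_C_mul ha] at hG
  exact hdvd (dvd_ordAt_pow_sub_self hp hG)

theorem statement_13_general (p : ℕ) [Fact p.Prime] (s : ℕ)
    (f : RatFunc (AlgebraicClosure (ZMod p))) (α : AlgebraicClosure (ZMod p))
    (u : ℕ) (hpu : ¬ p ∣ u)
    (hord : ordAt α f = -(u : ℤ))
    (v : Fin (s + s) → AlgebraicClosure (ZMod p)) (i : Fin (s + s))
    (hi : ∀ α' : AlgebraicClosure (ZMod p), HasPoleAt f α' →
      ∀ j : Fin (s + s), j ≠ i → α - v i ≠ α' - v j) :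
    HasPoleAt (Lvf s f v) (α - v i) ∧ ordAt (α - v i) (Lvf s f v) = -(u : ℤ) ∧
      ¬ MemE p (Lvf s f v) := by
  have hu : u ≠ 0 := by
    rintro rfl
    exact hpu (dvd_zero p)
  have hpole_i : ordAt (α - v i) (shift (v i) f) = -(u : ℤ) := by
    rw [ordAt_shift, sub_add_cancel, hord]
  have hrest : ∀ j ≠ i, 0 ≤ ordAt (α - v i) (shift (v j) f) := by
    intro j hj
    rw [ordAt_shift]
    by_contra! hneg
    exact hi _ (hasPoleAt_iff_ordAt_neg.2 hneg) j hj (add_sub_cancel_right _ _).symm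
  have hL : ordAt (α - v i) (Lvf s f v) = -(u : ℤ) :=
    (ordAt_Lvf_of_isolated_pole (by omega) hrest).trans hpole_i
  refine ⟨hasPoleAt_iff_ordAt_neg.2 (by omega), hL,
    not_memE_of_ordAt_neg (w := α - v i) (Fact.out : p.Prime).one_lt (by omega) ?_⟩
  rwa [hL, dvd_neg, Int.natCast_dvd_natCast]

/-- The key step in the proof of Lemma 4.4 of the paper: if the shifted pole
`α - v_i` is not matched by any other shifted pole, then `L_{v,f}` has a pole there
of the same order `u`; since `p ∤ u`, it follows that `L_{v,f}` is not exceptional. -/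
theorem statement_13 (p : ℕ) [Fact p.Prime] (s : ℕ) (hs : 1 ≤ s)
    (f : RatFunc (AlgebraicClosure (ZMod p))) (α : AlgebraicClosure (ZMod p))
    (u : ℕ) (hu : 0 < u) (hpu : ¬ p ∣ u)
    (hpole : HasPoleAt f α) (hord : ordAt α f = -(u : ℤ))
    (v : Fin (s + s) → AlgebraicClosure (ZMod p)) (i : Fin (s + s))
    (hi : ∀ α' : AlgebraicClosure (ZMod p), HasPoleAt f α' →
      ∀ j : Fin (s + s), j ≠ i → α - v i ≠ α' - v j) :
    HasPoleAt (Lvf s f v) (α - v i) ∧ ordAt (α - v i) (Lvf s f v) = -(u : ℤ) ∧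
      ¬ MemE p (Lvf s f v) :=
  statement_13_general p s f α u hpu hord v i hi

end RestrictedCoords
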